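/- arXiv:2405.10167 — 3 statements merged into one kernel-verified Lean document; each statement's English description precedes it below -/
import Mathlib

section
/- Let G have T triangles and τ = 12(T/ε²)^{1/3} for ε ∈ (0,2). Call a triangle heavy if all three of its edges are τ-heavy. Then the number of heavy triangles is at most εT/8. -/
attribute [local instance] Classical.propDecidable

open Finset

section Aux
variable {V : Type*}

lemma sorted_triple_exists [DecidableEq V] {f : V → ℕ} (hf : Function.Injective f)
    {a b c : V} (hab : a ≠ b) (hac : a ≠ c) (hbc : b ≠ c) :
    ∃ x y z : V, f x < f y ∧ f y < f z ∧ ({x, y, z} : Finset V) = {a, b, c} := by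
  have fab : f a ≠ f b := fun h => hab (hf h)
  have fac : f a ≠ f c := fun h => hac (hf h)
  have fbc : f b ≠ f c := fun h => hbc (hf h)
  rcases lt_or_gt_of_ne fab with h1 | h1
  · rcases lt_or_gt_of_ne fbc with h2 | h2
    · exact ⟨a, b, c, h1, h2, rfl⟩
    · rcases lt_or_gt_of_ne fac with h3 | h3
      · exact ⟨a, c, b, h3, h2, by ext v; simp; tauto⟩
      · exact ⟨c, a, b, h3, h1, by ext v; simp; tauto⟩
  · rcases lt_or_gt_of_ne fac with h3 | h3
    · exact ⟨b, a, c, h1, h3, by ext v; simp; tauto⟩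
    · rcases lt_or_gt_of_ne fbc with h2 | h2
      · exact ⟨b, c, a, h2, h3, by ext v; simp; tauto⟩
      · exact ⟨c, b, a, h2, h1, by ext v; simp; tauto⟩

lemma sorted_triple_inj [DecidableEq V] {f : V → ℕ} (hf : Function.Injective f)
    {x y z x' y' z' : V} (h1 : f x < f y) (h2 : f y < f z)
    (h1' : f x' < f y') (h2' : f y' < f z')
    (he : ({x, y, z} : Finset V) = ({x', y', z'} : Finset V)) :
    x = x' ∧ y = y' ∧ z = z' := by
  have mx : x = x' ∨ x = y' ∨ x = z' := by
    simpa using (Finset.ext_iff.mp he x).mp (by simp)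
  have mx' : x' = x ∨ x' = y ∨ x' = z := by
    simpa using (Finset.ext_iff.mp he x').mpr (by simp)
  have mz : z = x' ∨ z = y' ∨ z = z' := by
    simpa using (Finset.ext_iff.mp he z).mp (by simp)
  have mz' : z' = x ∨ z' = y ∨ z' = z := by
    simpa using (Finset.ext_iff.mp he z').mpr (by simp)
  have hxx : x = x' := by
    have hle : f x' ≤ f x := by
      rcases mx with rfl | rfl | rfl
      · exact le_refl _
      · exact le_of_lt h1'
      · exact le_of_lt (h1'.trans h2')
    have hle' : f x ≤ f x' := by
      rcases mx' with rfl | rfl | rfl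
      · exact le_refl _
      · exact le_of_lt h1
      · exact le_of_lt (h1.trans h2)
    exact hf (le_antisymm hle' hle)
  have hzz : z = z' := by
    have hle : f z ≤ f z' := by
      rcases mz with rfl | rfl | rfl
      · exact le_of_lt (h1'.trans h2')
      · exact le_of_lt h2'
      · exact le_refl _
    have hle' : f z' ≤ f z := by
      rcases mz' with rfl | rfl | rfl
      · exact le_of_lt (h1.trans h2)
      · exact le_of_lt h2
      · exact le_refl _
    exact hf (le_antisymm hle hle')
  refine ⟨hxx, ?_, hzz⟩
  have my : y = x' ∨ y = y' ∨ y = z' := by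
    simpa using (Finset.ext_iff.mp he y).mp (by simp)
  rcases my with rfl | rfl | rfl
  · exact absurd (hxx ▸ h1) (lt_irrefl _)
  · rfl
  · exact absurd (hzz ▸ h2) (lt_irrefl _)

variable [Fintype V] [DecidableEq V] (G : SimpleGraph V) [DecidableRel G.Adj]

lemma clique_edge_mem {a b c : V} (hab : G.Adj a b) (hac : G.Adj a c) (hbc : G.Adj b c)
    {e : Sym2 V} (he : e ∈ ({a, b, c} : Finset V).sym2) (heE : e ∈ G.edgeFinset) :
    e = s(a, b) ∨ e = s(a, c) ∨ e = s(b, c) := by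
  induction e with
  | _ u v =>
    rw [Finset.mk_mem_sym2_iff] at he
    rw [SimpleGraph.mem_edgeFinset, SimpleGraph.mem_edgeSet] at heE
    simp only [Finset.mem_insert, Finset.mem_singleton] at he
    obtain ⟨hu, hv⟩ := he
    rcases hu with rfl | rfl | rfl <;> rcases hv with rfl | rfl | rfl <;>
      simp_all [Sym2.eq_iff]

lemma clique_filter_card {a b c : V} (hab : G.Adj a b) (hac : G.Adj a c) (hbc : G.Adj b c) :
    (G.edgeFinset.filter (fun e => e ∈ ({a, b, c} : Finset V).sym2)).card = 3 := by
  have hset : G.edgeFinset.filter (fun e => e ∈ ({a, b, c} : Finset V).sym2)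
      = {s(a, b), s(a, c), s(b, c)} := by
    ext e
    simp only [Finset.mem_filter, Finset.mem_insert, Finset.mem_singleton]
    constructor
    · rintro ⟨h1, h2⟩; exact clique_edge_mem G hab hac hbc h2 h1
    · rintro (rfl | rfl | rfl) <;>
        simp [SimpleGraph.mem_edgeFinset, hab, hac, hbc, Finset.mk_mem_sym2_iff]
  rw [hset]
  have h1 : a ≠ b := hab.ne
  have h2 : a ≠ c := hac.ne
  have h3 : b ≠ c := hbc.ne
  rw [Finset.card_insert_of_notMem, Finset.card_insert_of_notMem, Finset.card_singleton]
  · simp only [Finset.mem_singleton, Sym2.eq_iff]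
    tauto
  · simp only [Finset.mem_insert, Finset.mem_singleton, Sym2.eq_iff]
    tauto

end Aux

set_option maxHeartbeats 1000000 in
/-- With `T` triangles and `τ = 12 (T/ε²)^(1/3)` for `ε ∈ (0,2)`, the number of
heavy triangles (triangles all of whose edges are `τ`-heavy, i.e. each contained
in at least `τ` triangles) is at most `εT/8`. -/
theorem heavy_triangles_card_le {V : Type*} [Fintype V] [DecidableEq V]
    (G : SimpleGraph V) [DecidableRel G.Adj] (ε : ℝ) (hε : ε ∈ Set.Ioo (0 : ℝ) 2)
    (T : ℕ) (hT : T = (G.cliqueFinset 3).card) (hT0 : 0 < T)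
    (τ : ℝ) (hτ : τ = 12 * ((T : ℝ) / ε ^ 2) ^ ((1 : ℝ) / 3)) :
    (((G.cliqueFinset 3).filter (fun Δ => ∀ e ∈ Δ.sym2, e ∈ G.edgeFinset →
        τ ≤ (((G.cliqueFinset 3).filter (fun t => e ∈ t.sym2)).card : ℝ))).card : ℝ)
      ≤ ε * T / 8 := by
  obtain ⟨hε0, hε2⟩ := hε
  set tri : Sym2 V → ℕ := fun e => ((G.cliqueFinset 3).filter (fun t => e ∈ t.sym2)).card
    with htri
  set H : Finset (Sym2 V) := G.edgeFinset.filter (fun e => τ ≤ (tri e : ℝ)) with hH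
  -- Step 1 : sum of triangle counts over all edges is 3T
  have hsum : ∑ e ∈ G.edgeFinset, tri e = 3 * T := by
    have h1 : ∑ e ∈ G.edgeFinset, tri e
        = ∑ Δ ∈ G.cliqueFinset 3, (G.edgeFinset.filter (fun e => e ∈ Δ.sym2)).card := by
      simp only [htri, Finset.card_filter]
      rw [Finset.sum_comm]
    rw [h1, Finset.sum_congr rfl (fun Δ hΔ => ?_), Finset.sum_const, hT, smul_eq_mul,
      mul_comm]
    obtain ⟨a, b, c, hab, hac, hbc, rfl⟩ :=
      SimpleGraph.is3Clique_iff.mp (SimpleGraph.mem_cliqueFinset_iff.mp hΔ)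
    exact clique_filter_card G hab hac hbc
  -- Step 2 : τ * #H ≤ 3T
  have hτpos : 0 < τ := by
    rw [hτ]
    have : (0:ℝ) < (T : ℝ) / ε ^ 2 := by positivity
    positivity
  have hHcard : τ * (H.card : ℝ) ≤ 3 * (T : ℝ) := by
    calc τ * (H.card : ℝ) = ∑ _e ∈ H, τ := by rw [Finset.sum_const, nsmul_eq_mul, mul_comm]
      _ ≤ ∑ e ∈ H, (tri e : ℝ) :=
          Finset.sum_le_sum (fun e he => (Finset.mem_filter.mp he).2)
      _ ≤ ∑ e ∈ G.edgeFinset, (tri e : ℝ) :=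
          Finset.sum_le_sum_of_subset_of_nonneg (Finset.filter_subset _ _)
            (fun e _ _ => Nat.cast_nonneg _)
      _ = 3 * (T : ℝ) := by rw [← Nat.cast_sum, hsum]; push_cast; ring
  -- the ordering injection
  set f : V → ℕ := fun v => ((Fintype.equivFin V) v : ℕ) with hf
  have hfinj : Function.Injective f := fun u v huv => by
    apply (Fintype.equivFin V).injective
    exact Fin.val_injective huv
  -- heavy-pair relation and associated objects
  set W : V → V → Prop := fun x y => s(x, y) ∈ H with hWdef
  have hWadj : ∀ x y, W x y → G.Adj x y := fun x y hw => by
    have := (Finset.mem_filter.mp hw).1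
    rwa [SimpleGraph.mem_edgeFinset, SimpleGraph.mem_edgeSet] at this
  have hWsymm : ∀ x y, W x y → W y x := fun x y hw => by
    simp only [hWdef] at hw ⊢
    rwa [Sym2.eq_swap]
  set P : Finset (V × V) := Finset.univ.filter (fun q => f q.1 < f q.2 ∧ W q.1 q.2) with hP
  set A : V → ℕ := fun x => (Finset.univ.filter (fun z => f x < f z ∧ W x z)).card with hA
  set N : V × V → ℕ :=
    fun q => (Finset.univ.filter (fun z => f q.2 < f z ∧ W q.1 z ∧ W q.2 z)).card with hN
  set S : Finset (V × V × V) := Finset.univ.filter (fun p =>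
    f p.1 < f p.2.1 ∧ f p.2.1 < f p.2.2 ∧ W p.1 p.2.1 ∧ W p.1 p.2.2 ∧ W p.2.1 p.2.2)
    with hS
  -- Step 3 : bijection between heavy triangles and sorted heavy triples
  have hbij : ((G.cliqueFinset 3).filter (fun Δ => ∀ e ∈ Δ.sym2, e ∈ G.edgeFinset →
      τ ≤ ((tri e : ℕ) : ℝ))).card = S.card := by
    apply (Finset.card_bij (fun p _ => ({p.1, p.2.1, p.2.2} : Finset V)) ?_ ?_ ?_).symm
    · -- maps to
      rintro ⟨x, y, z⟩ hp
      obtain ⟨-, h1, h2, wxy, wxz, wyz⟩ := Finset.mem_filter.mp hp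
      have axy := hWadj _ _ wxy
      have axz := hWadj _ _ wxz
      have ayz := hWadj _ _ wyz
      rw [Finset.mem_filter]
      refine ⟨SimpleGraph.mem_cliqueFinset_iff.mpr (SimpleGraph.is3Clique_iff.mpr
        ⟨x, y, z, axy, axz, ayz, rfl⟩), ?_⟩
      intro e he heE
      have hcases := clique_edge_mem G axy axz ayz he heE
      rcases hcases with rfl | rfl | rfl
      · exact (Finset.mem_filter.mp wxy).2
      · exact (Finset.mem_filter.mp wxz).2
      · exact (Finset.mem_filter.mp wyz).2
    · -- injective
      rintro ⟨x, y, z⟩ hp ⟨x', y', z'⟩ hp' heq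
      obtain ⟨-, h1, h2, -⟩ := Finset.mem_filter.mp hp
      obtain ⟨-, h1', h2', -⟩ := Finset.mem_filter.mp hp'
      have heq' : ({x, y, z} : Finset V) = ({x', y', z'} : Finset V) := heq
      obtain ⟨e1, e2, e3⟩ := sorted_triple_inj hfinj h1 h2 h1' h2' heq'
      exact Prod.ext e1 (Prod.ext e2 e3)
    · -- surjective
      intro Δ hΔ
      obtain ⟨hΔC, hheavy⟩ := Finset.mem_filter.mp hΔ
      obtain ⟨a, b, c, hab, hac, hbc, rfl⟩ :=
        SimpleGraph.is3Clique_iff.mp (SimpleGraph.mem_cliqueFinset_iff.mp hΔC)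
      obtain ⟨x, y, z, hxy, hyz, hxyz⟩ := sorted_triple_exists hfinj hab.ne hac.ne hbc.ne
      have hclique : G.IsNClique 3 ({a, b, c} : Finset V) :=
        SimpleGraph.mem_cliqueFinset_iff.mp hΔC
      have hmem : ∀ v ∈ ({x, y, z} : Finset V), v ∈ ({a, b, c} : Finset V) := by
        rw [hxyz]; exact fun v hv => hv
      have hW3 : ∀ u v : V, u ∈ ({x, y, z} : Finset V) → v ∈ ({x, y, z} : Finset V) →
          u ≠ v → W u v := by
        intro u v hu hv huv
        have hadj : G.Adj u v := hclique.1 (by exact_mod_cast hmem u hu)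
          (by exact_mod_cast hmem v hv) huv
        have heE : s(u, v) ∈ G.edgeFinset := by
          rw [SimpleGraph.mem_edgeFinset, SimpleGraph.mem_edgeSet]; exact hadj
        have heΔ : s(u, v) ∈ ({a, b, c} : Finset V).sym2 := by
          rw [Finset.mk_mem_sym2_iff]
          exact ⟨hmem u hu, hmem v hv⟩
        exact Finset.mem_filter.mpr ⟨heE, hheavy _ heΔ heE⟩
      have hnexy : x ≠ y := fun h => absurd (h ▸ hxy) (lt_irrefl _)
      have hneyz : y ≠ z := fun h => absurd (h ▸ hyz) (lt_irrefl _)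
      have hnexz : x ≠ z := fun h => absurd (h ▸ (hxy.trans hyz)) (lt_irrefl _)
      refine ⟨(x, y, z), ?_, hxyz⟩
      rw [Finset.mem_filter]
      exact ⟨Finset.mem_univ _, hxy, hyz,
        hW3 x y (by simp) (by simp) hnexy,
        hW3 x z (by simp) (by simp) hnexz,
        hW3 y z (by simp) (by simp) hneyz⟩
  -- Step 4 : fiberwise count : #S = ∑ q in P, N q
  have hfib : S.card = ∑ q ∈ P, N q := by
    rw [Finset.card_eq_sum_card_fiberwise (f := fun p => (p.1, p.2.1)) (t := P) ?_]
    · refine Finset.sum_congr rfl (fun q hq => ?_)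
      obtain ⟨-, hq1, hq2⟩ := Finset.mem_filter.mp hq
      refine Finset.card_bij' (fun p _ => p.2.2) (fun z _ => (q.1, q.2, z)) ?_ ?_ ?_ ?_
      · rintro ⟨x, y, z⟩ hp
        obtain ⟨hp1, hp2⟩ := Finset.mem_filter.mp hp
        obtain ⟨-, h1, h2, w1, w2, w3⟩ := Finset.mem_filter.mp hp1
        have e1 : x = q.1 := congrArg Prod.fst hp2
        have e2 : y = q.2 := congrArg Prod.snd hp2
        subst e1; subst e2
        exact Finset.mem_filter.mpr ⟨Finset.mem_univ _, h2, w2, w3⟩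
      · intro z hz
        obtain ⟨-, h1, w1, w2⟩ := Finset.mem_filter.mp hz
        refine Finset.mem_filter.mpr ⟨?_, rfl⟩
        exact Finset.mem_filter.mpr ⟨Finset.mem_univ _, hq1, h1, hq2, w1, w2⟩
      · rintro ⟨x, y, z⟩ hp
        obtain ⟨hp1, hp2⟩ := Finset.mem_filter.mp hp
        have e1 : x = q.1 := congrArg Prod.fst hp2
        have e2 : y = q.2 := congrArg Prod.snd hp2
        simp [e1, e2]
      · intro z hz; rfl
    · rintro ⟨x, y, z⟩ hp
      obtain ⟨-, h1, h2, w1, w2, w3⟩ := Finset.mem_filter.mp hp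
      exact Finset.mem_filter.mpr ⟨Finset.mem_univ _, h1, w1⟩
  -- Step 5 : ∑ x, A x = #P
  have hAP : ∑ x : V, A x = P.card := by
    rw [Finset.card_eq_sum_card_fiberwise (f := Prod.fst) (t := Finset.univ)
      (fun q _ => Finset.mem_univ _)]
    refine Finset.sum_congr rfl (fun x _ => ?_)
    refine Finset.card_bij' (fun z _ => (x, z)) (fun q _ => q.2) ?_ ?_ ?_ ?_
    · intro z hz
      obtain ⟨-, h1, w1⟩ := Finset.mem_filter.mp hz
      refine Finset.mem_filter.mpr ⟨?_, rfl⟩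
      exact Finset.mem_filter.mpr ⟨Finset.mem_univ _, h1, w1⟩
    · rintro ⟨u, z⟩ hq
      obtain ⟨hq1, hq2⟩ := Finset.mem_filter.mp hq
      obtain ⟨-, h1, w1⟩ := Finset.mem_filter.mp hq1
      have e1 : u = x := hq2
      subst e1
      exact Finset.mem_filter.mpr ⟨Finset.mem_univ _, h1, w1⟩
    · intro z hz; rfl
    · rintro ⟨u, z⟩ hq
      obtain ⟨hq1, hq2⟩ := Finset.mem_filter.mp hq
      have e1 : u = x := hq2
      simp [e1]
  -- Step 6 : N q ≤ A q.1 and N q ≤ A q.2 on P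
  have hNA1 : ∀ q ∈ P, N q ≤ A q.1 := by
    intro q hq
    obtain ⟨-, h1, -⟩ := Finset.mem_filter.mp hq
    apply Finset.card_le_card
    intro z hz
    obtain ⟨-, hz1, hz2, hz3⟩ := Finset.mem_filter.mp hz
    exact Finset.mem_filter.mpr ⟨Finset.mem_univ _, h1.trans hz1, hz2⟩
  have hNA2 : ∀ q ∈ P, N q ≤ A q.2 := by
    intro q hq
    apply Finset.card_le_card
    intro z hz
    obtain ⟨-, hz1, hz2, hz3⟩ := Finset.mem_filter.mp hz
    exact Finset.mem_filter.mpr ⟨Finset.mem_univ _, hz1, hz3⟩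
  -- Step 7 : #P ≤ #H
  have hPH : P.card ≤ H.card := by
    apply Finset.card_le_card_of_injOn (fun q => s(q.1, q.2))
    · intro q hq
      exact (Finset.mem_filter.mp hq).2.2
    · rintro ⟨x, y⟩ hq ⟨x', y'⟩ hq' heq
      obtain ⟨-, h1, -⟩ := Finset.mem_filter.mp (Finset.mem_coe.mp hq)
      obtain ⟨-, h1', -⟩ := Finset.mem_filter.mp (Finset.mem_coe.mp hq')
      simp only [Sym2.eq_iff] at heq
      rcases heq with ⟨rfl, rfl⟩ | ⟨rfl, rfl⟩
      · rfl
      · exact absurd (h1.trans h1') (lt_irrefl _)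
  -- Step 8 : Cauchy–Schwarz, (#S)² ≤ (#H)³
  have hkey : ((S.card : ℝ)) ^ 2 ≤ (H.card : ℝ) ^ 3 := by
    have hScast : (S.card : ℝ) = ∑ q ∈ P, (N q : ℝ) := by
      rw [hfib]; push_cast; ring
    have cs : (∑ q ∈ P, (N q : ℝ)) ^ 2 ≤ (P.card : ℝ) * ∑ q ∈ P, (N q : ℝ) ^ 2 :=
      sq_sum_le_card_mul_sum_sq
    have hNsq : ∑ q ∈ P, (N q : ℝ) ^ 2 ≤ ∑ q ∈ P, (A q.1 : ℝ) * (A q.2 : ℝ) := by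
      refine Finset.sum_le_sum (fun q hq => ?_)
      rw [sq]
      have := Nat.mul_le_mul (hNA1 q hq) (hNA2 q hq)
      exact_mod_cast this
    have hprod : ∑ q ∈ P, (A q.1 : ℝ) * (A q.2 : ℝ)
        ≤ ∑ q ∈ (Finset.univ ×ˢ Finset.univ : Finset (V × V)), (A q.1 : ℝ) * (A q.2 : ℝ) := by
      refine Finset.sum_le_sum_of_subset_of_nonneg ?_ (fun q _ _ => mul_nonneg (Nat.cast_nonneg _) (Nat.cast_nonneg _))
      intro q hq
      exact Finset.mem_product.mpr ⟨Finset.mem_univ _, Finset.mem_univ _⟩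
    have hprod2 : ∑ q ∈ (Finset.univ ×ˢ Finset.univ : Finset (V × V)),
        (A q.1 : ℝ) * (A q.2 : ℝ) = (∑ x : V, (A x : ℝ)) ^ 2 := by
      rw [Finset.sum_product, sq, Finset.sum_mul_sum]
    have hAcast : (∑ x : V, (A x : ℝ)) = (P.card : ℝ) := by
      rw [← hAP]; push_cast; ring
    have hPH' : (P.card : ℝ) ≤ (H.card : ℝ) := by exact_mod_cast hPH
    calc ((S.card : ℝ)) ^ 2 = (∑ q ∈ P, (N q : ℝ)) ^ 2 := by rw [hScast]
      _ ≤ (P.card : ℝ) * ∑ q ∈ P, (N q : ℝ) ^ 2 := cs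
      _ ≤ (P.card : ℝ) * ((∑ x : V, (A x : ℝ)) ^ 2) := by
          refine mul_le_mul_of_nonneg_left ?_ (Nat.cast_nonneg _)
          exact (hNsq.trans hprod).trans_eq hprod2
      _ = (P.card : ℝ) ^ 3 := by rw [hAcast]; ring
      _ ≤ (H.card : ℝ) ^ 3 := by
          exact pow_le_pow_left₀ (Nat.cast_nonneg _) hPH' 3
  -- Step 9 : final arithmetic
  have hτ3 : τ ^ 3 = 1728 * (T : ℝ) / ε ^ 2 := by
    rw [hτ, mul_pow]
    have hx : (0 : ℝ) ≤ (T : ℝ) / ε ^ 2 := by positivity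
    rw [← Real.rpow_natCast (((T : ℝ) / ε ^ 2) ^ ((1 : ℝ) / 3)) 3, ← Real.rpow_mul hx]
    norm_num
    ring
  have hH3 : (H.card : ℝ) ^ 3 ≤ ε ^ 2 * (T : ℝ) ^ 2 / 64 := by
    have hHle : (H.card : ℝ) ≤ 3 * (T : ℝ) / τ := by
      rw [le_div_iff₀ hτpos]
      linarith [hHcard]
    have h3 : (H.card : ℝ) ^ 3 ≤ (3 * (T : ℝ) / τ) ^ 3 :=
      pow_le_pow_left₀ (Nat.cast_nonneg _) hHle 3
    have hτne : τ ≠ 0 := ne_of_gt hτpos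
    have hεne : ε ≠ 0 := ne_of_gt hε0
    have hTpos : (0 : ℝ) < (T : ℝ) := by exact_mod_cast hT0
    have h4 : (3 * (T : ℝ) / τ) ^ 3 = 27 * (T : ℝ) ^ 3 / τ ^ 3 := by
      field_simp; ring
    rw [h4, hτ3] at h3
    have h5 : 27 * (T : ℝ) ^ 3 / (1728 * (T : ℝ) / ε ^ 2) = ε ^ 2 * (T : ℝ) ^ 2 / 64 := by
      rw [div_div_eq_mul_div]
      field_simp
      ring
    rwa [h5] at h3
  -- conclude
  have hfinal : (((G.cliqueFinset 3).filter (fun Δ => ∀ e ∈ Δ.sym2, e ∈ G.edgeFinset →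
      τ ≤ ((tri e : ℕ) : ℝ))).card : ℝ) ^ 2 ≤ (ε * (T : ℝ) / 8) ^ 2 := by
    rw [hbij]
    calc ((S.card : ℝ)) ^ 2 ≤ (H.card : ℝ) ^ 3 := hkey
      _ ≤ ε ^ 2 * (T : ℝ) ^ 2 / 64 := hH3
      _ = (ε * (T : ℝ) / 8) ^ 2 := by ring
  have hrhs : (0 : ℝ) ≤ ε * (T : ℝ) / 8 := by positivity
  have hlhs : (0 : ℝ) ≤ (((G.cliqueFinset 3).filter (fun Δ => ∀ e ∈ Δ.sym2,
      e ∈ G.edgeFinset → τ ≤ ((tri e : ℕ) : ℝ))).card : ℝ) := Nat.cast_nonneg _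
  nlinarith [hfinal, hlhs, hrhs]
end

section
/- Let G have T triangles and τ = 12(T/ε²)^{1/3} for ε ∈ (0,2). Then the number of light triangles (triangles with at least one τ-light edge) is at least (1 − ε/8)T. -/
/-!
A triangle that is not light has all three of its edges `τ`-heavy. Every triangle has three
edges, so double counting leaves at most `3T/τ` heavy edges, and by the Kruskal–Katona theorem
a graph with `m` edges has at most `m^(3/2)` triangles. The heavy triangles therefore number
at most `(3T/τ)^(3/2) = εT/8`.
-/

open Finset
open scoped FinsetFamily

theorem Nat.choose_three_succ_sq_le_choose_two_pow_three (j : ℕ) :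
    (j + 1).choose 3 ^ 2 ≤ j.choose 2 ^ 3 := by
  obtain _ | _ | a := j
  · rfl
  · rfl
  set c := (a + 2).choose 2
  set d := (a + 2 + 1).choose 3
  have hd : (a + 3) * c = d * 3 := Nat.add_one_mul_choose_eq (a + 2) 2
  have hc : (a + 2) * (a + 1) = c * 2 := by simpa using Nat.add_one_mul_choose_eq (a + 1) 1
  have hc' : (a + 3) ^ 2 ≤ 9 * c := by nlinarith
  have : 9 * d ^ 2 ≤ 9 * c ^ 3 :=
    calc 9 * d ^ 2 = (a + 3) ^ 2 * c ^ 2 := by rw [← mul_pow, hd]; ring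
      _ ≤ 9 * c * c ^ 2 := by gcongr
      _ = 9 * c ^ 3 := by ring
  omega

theorem Nat.lt_choose_three (n : ℕ) : n < (n + 3).choose 3 := by
  rw [Nat.choose_succ_succ' (n + 2) 2, Nat.choose_succ_succ' (n + 1) 1, Nat.choose_one_right]
  omega

namespace Finset

variable {α : Type*} [DecidableEq α]

theorem shadow_image_map_subset {β : Type*} [DecidableEq β] (f : α ↪ β)
    (𝒜 : Finset (Finset α)) : ∂ (𝒜.image (map f)) ⊆ (∂ 𝒜).image (map f) := by
  intro t ht
  obtain ⟨_, ⟨s, hs, rfl⟩, b, hb, rfl⟩ := by simpa only [mem_shadow_iff, mem_image] using ht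
  obtain ⟨a, ha, rfl⟩ := mem_map.1 hb
  rw [← map_erase]
  exact mem_image_of_mem _ (erase_mem_shadow hs ha)

theorem choose_pred_le_card_shadow [Fintype α] {𝒜 : Finset (Finset α)} {r k : ℕ}
    (hr : 1 ≤ r) (hrk : r ≤ k) (h𝒜 : (𝒜 : Set (Finset α)).Sized r) (hk : k.choose r ≤ #𝒜) :
    k.choose (r - 1) ≤ #(∂ 𝒜) := by
  -- `+ k` leaves room for the hypothesis `k ≤ n` of the Lovász form over `Fin n`.
  set n := Fintype.card α + k
  obtain ⟨f⟩ : Nonempty (α ↪ Fin n) := Function.Embedding.nonempty_of_card_le (by simp [n])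
  have hinj : Function.Injective (map f) := map_injective f
  have hsized : ((𝒜.image (map f) : Finset (Finset (Fin n))) : Set (Finset (Fin n))).Sized r := by
    simpa [Set.Sized] using h𝒜
  calc k.choose (r - 1) ≤ #(∂ (𝒜.image (map f))) := by
        simpa using kruskal_katona_lovasz_form hr hrk (by omega) hsized
          (by rwa [card_image_of_injective _ hinj])
    _ ≤ #((∂ 𝒜).image (map f)) := card_le_card (shadow_image_map_subset f 𝒜)
    _ ≤ #(∂ 𝒜) := card_image_le

theorem card_sq_le_card_shadow_pow_three [Fintype α] {𝒜 : Finset (Finset α)}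
    (h𝒜 : (𝒜 : Set (Finset α)).Sized 3) : #𝒜 ^ 2 ≤ #(∂ 𝒜) ^ 3 := by
  obtain h0 | hpos := Nat.eq_zero_or_pos #𝒜
  · simp [h0]
  have hex : ∃ k : ℕ, #𝒜 < k.choose 3 := ⟨_, Nat.lt_choose_three _⟩
  obtain ⟨j, hj⟩ : ∃ j, Nat.find hex = j + 1 :=
    Nat.exists_eq_add_one.2 (Nat.pos_of_ne_zero fun h ↦ by simpa [h] using Nat.find_spec hex)
  have hlt : #𝒜 < (j + 1).choose 3 := hj ▸ Nat.find_spec hex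
  have hle : j.choose 3 ≤ #𝒜 := not_lt.1 (Nat.find_min hex (by omega))
  have hj3 : 3 ≤ j := by
    by_contra! h
    have : (j + 1).choose 3 ≤ 1 := (Nat.choose_mono 3 (by omega)).trans_eq (Nat.choose_self 3)
    omega
  calc #𝒜 ^ 2 ≤ (j + 1).choose 3 ^ 2 := by gcongr
    _ ≤ j.choose 2 ^ 3 := Nat.choose_three_succ_sq_le_choose_two_pow_three j
    _ ≤ #(∂ 𝒜) ^ 3 := by gcongr; exact choose_pred_le_card_shadow (by norm_num) hj3 h𝒜 hle

end Finset

namespace SimpleGraph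

variable {V : Type*} [Fintype V] [DecidableEq V] (G : SimpleGraph V) [DecidableRel G.Adj]

theorem shadow_cliqueFinset_subset (n : ℕ) : ∂ (G.cliqueFinset (n + 1)) ⊆ G.cliqueFinset n := by
  intro t ht
  obtain ⟨s, hs, a, ha, rfl⟩ := mem_shadow_iff.1 ht
  exact mem_cliqueFinset_iff.2 ((mem_cliqueFinset_iff.1 hs).erase_of_mem ha)

theorem cliqueFinset_two_subset_image_toFinset :
    G.cliqueFinset 2 ⊆ G.edgeFinset.image Sym2.toFinset := by
  intro s hs
  obtain ⟨hclique, hcard⟩ := mem_cliqueFinset_iff.1 hs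
  obtain ⟨x, y, hxy, rfl⟩ := card_eq_two.1 hcard
  refine mem_image.2 ⟨s(x, y), mem_edgeFinset.2 ?_, Sym2.toFinset_mk_eq⟩
  exact hclique (by simp) (by simp) hxy

theorem card_cliqueFinset_three_sq_le : #(G.cliqueFinset 3) ^ 2 ≤ #G.edgeFinset ^ 3 := by
  have hshadow : #(∂ (G.cliqueFinset 3)) ≤ #G.edgeFinset :=
    calc #(∂ (G.cliqueFinset 3)) ≤ #(G.cliqueFinset 2) :=
          card_le_card (G.shadow_cliqueFinset_subset 2)
      _ ≤ #(G.edgeFinset.image Sym2.toFinset) :=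
          card_le_card G.cliqueFinset_two_subset_image_toFinset
      _ ≤ #G.edgeFinset := card_image_le
  calc #(G.cliqueFinset 3) ^ 2 ≤ #(∂ (G.cliqueFinset 3)) ^ 3 :=
        card_sq_le_card_shadow_pow_three fun _ h ↦ (mem_cliqueFinset_iff.1 h).card_eq
    _ ≤ #G.edgeFinset ^ 3 := by gcongr

theorem card_filter_mem_sym2_edgeFinset_le (s : Finset V) :
    #{e ∈ G.edgeFinset | e ∈ s.sym2} ≤ (#s).choose 2 := by
  rw [← Sym2.card_image_offDiag]
  refine card_le_card fun e he ↦ ?_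
  induction e with
  | h x y =>
    obtain ⟨hadj, hmem⟩ := mem_filter.1 he
    rw [mem_edgeFinset, mem_edgeSet] at hadj
    rw [Finset.mk_mem_sym2_iff] at hmem
    exact mem_image.2 ⟨(x, y), mem_offDiag.2 ⟨hmem.1, hmem.2, hadj.ne⟩, rfl⟩

theorem sum_card_filter_mem_sym2_cliqueFinset_three_le :
    ∑ e ∈ G.edgeFinset, #{t ∈ G.cliqueFinset 3 | e ∈ t.sym2} ≤ 3 * #(G.cliqueFinset 3) := by
  calc ∑ e ∈ G.edgeFinset, #{t ∈ G.cliqueFinset 3 | e ∈ t.sym2}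
      = ∑ t ∈ G.cliqueFinset 3, #{e ∈ G.edgeFinset | e ∈ t.sym2} :=
        sum_card_bipartiteAbove_eq_sum_card_bipartiteBelow _
    _ ≤ ∑ t ∈ G.cliqueFinset 3, 3 := sum_le_sum fun t ht ↦ by
        simpa [(mem_cliqueFinset_iff.1 ht).card_eq] using G.card_filter_mem_sym2_edgeFinset_le t
    _ = 3 * #(G.cliqueFinset 3) := by rw [sum_const, smul_eq_mul, mul_comm]

def heavySubgraph (τ : ℝ) : SimpleGraph V :=
  G.deleteEdges {e | (#{t ∈ G.cliqueFinset 3 | e ∈ t.sym2} : ℝ) < τ}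

noncomputable instance (τ : ℝ) : DecidableRel (G.heavySubgraph τ).Adj :=
  inferInstanceAs (DecidableRel (G.deleteEdges _).Adj)

theorem card_edgeFinset_heavySubgraph_mul_le (τ : ℝ) :
    #(G.heavySubgraph τ).edgeFinset * τ ≤ 3 * #(G.cliqueFinset 3) := by
  have hsub : (G.heavySubgraph τ).edgeFinset ⊆ G.edgeFinset := edgeFinset_mono (deleteEdges_le _)
  have hheavy : ∀ e ∈ (G.heavySubgraph τ).edgeFinset,
      τ ≤ (#{t ∈ G.cliqueFinset 3 | e ∈ t.sym2} : ℝ) := by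
    intro e he
    have he := mem_edgeFinset.1 he
    simp only [heavySubgraph, edgeSet_deleteEdges, Set.mem_sdiff, Set.mem_ofPred_eq, not_lt] at he
    exact he.2
  calc #(G.heavySubgraph τ).edgeFinset * τ
      = ∑ _e ∈ (G.heavySubgraph τ).edgeFinset, τ := by rw [sum_const, nsmul_eq_mul]
    _ ≤ ∑ e ∈ (G.heavySubgraph τ).edgeFinset, (#{t ∈ G.cliqueFinset 3 | e ∈ t.sym2} : ℝ) :=
        sum_le_sum hheavy
    _ ≤ ∑ e ∈ G.edgeFinset, (#{t ∈ G.cliqueFinset 3 | e ∈ t.sym2} : ℝ) :=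
        sum_le_sum_of_subset_of_nonneg hsub fun _ _ _ ↦ Nat.cast_nonneg _
    _ ≤ 3 * #(G.cliqueFinset 3) := by
        exact_mod_cast G.sum_card_filter_mem_sym2_cliqueFinset_three_le

theorem filter_not_exists_light_subset_cliqueFinset_heavySubgraph (τ : ℝ) :
    {Δ ∈ G.cliqueFinset 3 | ¬∃ e ∈ Δ.sym2, e ∈ G.edgeFinset ∧
        (#{t ∈ G.cliqueFinset 3 | e ∈ t.sym2} : ℝ) < τ} ⊆ (G.heavySubgraph τ).cliqueFinset 3 := by
  intro Δ hΔ
  obtain ⟨hΔG, hheavy⟩ := mem_filter.1 hΔ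
  obtain ⟨hclique, hcard⟩ := mem_cliqueFinset_iff.1 hΔG
  refine mem_cliqueFinset_iff.2 ⟨fun x hx y hy hxy ↦ ?_, hcard⟩
  have hadj : G.Adj x y := hclique hx hy hxy
  refine (deleteEdges_adj ..).2 ⟨hadj, fun hlight ↦ hheavy ⟨s(x, y), ?_, ?_, hlight⟩⟩
  · exact Finset.mk_mem_sym2_iff.2 ⟨hx, hy⟩
  · exact mem_edgeFinset.2 hadj

end SimpleGraph

theorem eight_mul_le_mul_of_sq_le_pow_three {H m T ε τ : ℝ} (hm : 0 ≤ m)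
    (hT : 0 < T) (hε : 0 < ε) (hτ : τ = 12 * (T / ε ^ 2) ^ ((1 : ℝ) / 3))
    (hHm : H ^ 2 ≤ m ^ 3) (hmτ : m * τ ≤ 3 * T) : 8 * H ≤ ε * T := by
  have hτ3 : τ ^ 3 = 1728 * T / ε ^ 2 := by
    rw [hτ, mul_pow, ← Real.rpow_natCast ((T / ε ^ 2) ^ _) 3, ← Real.rpow_mul (by positivity)]
    norm_num
    ring
  have hτ0 : 0 ≤ τ := by rw [hτ]; positivity
  have hcube : m ^ 3 * (1728 * T) / ε ^ 2 ≤ 27 * T ^ 3 :=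
    calc m ^ 3 * (1728 * T) / ε ^ 2 = (m * τ) ^ 3 := by rw [mul_pow, hτ3, mul_div_assoc]
      _ ≤ (3 * T) ^ 3 := by gcongr
      _ = 27 * T ^ 3 := by ring
  have hm3 : 64 * m ^ 3 ≤ (ε * T) ^ 2 := by
    rw [div_le_iff₀ (by positivity)] at hcube
    nlinarith
  exact le_of_sq_le_sq (by nlinarith) (by positivity)

/-- With `T` triangles and `τ = 12 (T/ε²)^(1/3)` for `ε ∈ (0,2)`, the number of
light triangles (triangles having at least one `τ`-light edge, i.e. an edge
contained in fewer than `τ` triangles) is at least `(1 - ε/8) T`. -/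
theorem light_triangles_card_ge {V : Type*} [Fintype V] [DecidableEq V]
    (G : SimpleGraph V) [DecidableRel G.Adj] (ε : ℝ) (hε : ε ∈ Set.Ioo (0 : ℝ) 2)
    (T : ℕ) (hT : T = (G.cliqueFinset 3).card) (hT0 : 0 < T)
    (τ : ℝ) (hτ : τ = 12 * ((T : ℝ) / ε ^ 2) ^ ((1 : ℝ) / 3)) :
    (1 - ε / 8) * T ≤
      (((G.cliqueFinset 3).filter (fun Δ => ∃ e ∈ Δ.sym2, e ∈ G.edgeFinset ∧
        (((G.cliqueFinset 3).filter (fun t => e ∈ t.sym2)).card : ℝ) < τ)).card : ℝ) := by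
  set IsLight : Finset V → Prop := fun Δ => ∃ e ∈ Δ.sym2, e ∈ G.edgeFinset ∧
    (#{t ∈ G.cliqueFinset 3 | e ∈ t.sym2} : ℝ) < τ
  set heavy := (G.cliqueFinset 3).filter (¬IsLight ·)
  have hsplit : (#{Δ ∈ G.cliqueFinset 3 | IsLight Δ} : ℝ) + #heavy = T := by
    rw [hT]; exact_mod_cast card_filter_add_card_filter_not IsLight
  have hheavy : #heavy ^ 2 ≤ #(G.heavySubgraph τ).edgeFinset ^ 3 :=
    (Nat.pow_le_pow_left (card_le_card
      (G.filter_not_exists_light_subset_cliqueFinset_heavySubgraph τ)) 2).trans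
      (G.heavySubgraph τ).card_cliqueFinset_three_sq_le
  have hbound : 8 * (#heavy : ℝ) ≤ ε * T :=
    eight_mul_le_mul_of_sq_le_pow_three (by positivity) (by exact_mod_cast hT0)
      hε.1 hτ (by exact_mod_cast hheavy)
      (hT ▸ G.card_edgeFinset_heavySubgraph_mul_le τ)
  linarith
end

section
/- Consider the following random process on a graph G with m edges: pick a uniformly random edge e; if e is τ-light (λ_e < τ), pick a uniformly random triangle Δ containing e (if one exists), let i ∈ {1,2,3} be the number of τ-light edges of Δ, and output Δ with probability λ_e/(iτ). Then for every light triangle Δ (one having at least one τ-light edge), the probability the process outputs Δ equals exactly 1/(mτ). -/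
/-- For the process that picks a uniformly random edge `e` (probability `1/m`),
and if `e` is `τ`-light picks a uniform triangle containing `e` (probability
`1/λ_e`) and outputs it with probability `λ_e/(iτ)` where `i` is the number of
`τ`-light edges of the triangle: every light triangle `Δ` is output with
probability exactly `1/(mτ)`.  The output probability of `Δ` is the sum, over
the light edges of `Δ`, of `(1/m)·(1/λ_e)·(λ_e/(iτ))`. -/
theorem light_triangle_sample_prob {V : Type*} [Fintype V] [DecidableEq V]
    (G : SimpleGraph V) [DecidableRel G.Adj]
    (τ : ℕ) (hτ : 0 < τ) (m : ℕ) (hm : m = G.edgeFinset.card) (hm0 : 0 < m)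
    (lam : Sym2 V → ℕ)
    (hlam : ∀ e, lam e = ((G.cliqueFinset 3).filter (fun t => e ∈ t.sym2)).card)
    (Δ : Finset V) (hΔ : Δ ∈ G.cliqueFinset 3)
    (L : Finset (Sym2 V))
    (hL : L = G.edgeFinset.filter (fun e => e ∈ Δ.sym2 ∧ lam e < τ))
    (hLne : L.Nonempty) :
    ∑ e ∈ L, (1 / (m : ℝ)) * (1 / (lam e : ℝ)) * ((lam e : ℝ) / ((L.card : ℝ) * τ))
      = 1 / ((m : ℝ) * τ) := by
  have hLcard : (0 : ℝ) < (L.card : ℝ) := by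
    exact_mod_cast Finset.card_pos.mpr hLne
  have hm0' : (0 : ℝ) < (m : ℝ) := by exact_mod_cast hm0
  have hτ' : (0 : ℝ) < (τ : ℝ) := by exact_mod_cast hτ
  have hterm : ∀ e ∈ L, (1 / (m : ℝ)) * (1 / (lam e : ℝ)) *
      ((lam e : ℝ) / ((L.card : ℝ) * τ)) = 1 / ((m : ℝ) * L.card * τ) := by
    intro e he
    have hlampos : 0 < lam e := by
      rw [hlam]
      apply Finset.card_pos.mpr
      refine ⟨Δ, Finset.mem_filter.mpr ⟨hΔ, ?_⟩⟩
      have := Finset.mem_filter.mp (hL ▸ he)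
      exact this.2.1
    have hlam' : ((lam e : ℝ)) ≠ 0 := by positivity
    field_simp
  rw [Finset.sum_congr rfl hterm, Finset.sum_const, nsmul_eq_mul]
  field_simp
end
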